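/- Let X_1, X_2, … be i.i.d. random variables taking values in a finite set S with distribution l(·|θ*), and suppose l(·|θ) and l(·|θ*) are both strictly positive on S. Fix α ∈ (0,1) and β with D_α(l(·|θ*)‖l(·|θ)) > β. Then for every t, P( ∏_{τ=1}^t (l(X_τ|θ)/l(X_τ|θ*)) > e^{-βt} ) ≤ exp(−t(1−α)(D_α(l(·|θ*)‖l(·|θ)) − β)). -/

import Mathlib

open MeasureTheory ProbabilityTheory
open scoped ENNReal

/-- Chernoff-type bound on the likelihood ratio of i.i.d. samples, via the
α-Rényi divergence. -/
theorem likelihood_ratio_renyi_bound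
    {Ω : Type*} [MeasurableSpace Ω] (P : Measure Ω) [IsProbabilityMeasure P]
    {S : Type*} [Fintype S] [MeasurableSpace S] [MeasurableSingletonClass S]
    (lθ lθstar : S → ℝ)
    (hlθpos : ∀ s, 0 < lθ s) (hlθstarpos : ∀ s, 0 < lθstar s)
    (hlθsum : ∑ s, lθ s = 1) (hlθstarsum : ∑ s, lθstar s = 1)
    (X : ℕ → Ω → S) (hmeas : ∀ τ, Measurable (X τ))
    (hindep : iIndepFun X P)
    (hlaw : ∀ τ s, P {ω | X τ ω = s} = ENNReal.ofReal (lθstar s))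
    (α β : ℝ) (hα0 : 0 < α) (hα1 : α < 1)
    (hβ : β < (1 / (α - 1)) * Real.log (∑ s, lθstar s ^ α * lθ s ^ (1 - α)))
    (t : ℕ) :
    P {ω | (∏ τ ∈ Finset.range t, lθ (X τ ω) / lθstar (X τ ω)) > Real.exp (-β * t)}
      ≤ ENNReal.ofReal
          (Real.exp (-(t : ℝ) * (1 - α) *
            ((1 / (α - 1)) * Real.log (∑ s, lθstar s ^ α * lθ s ^ (1 - α)) - β))) := by
  -- S is nonempty
  have hSne : Nonempty S := by
    by_contra h
    rw [not_nonempty_iff] at h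
    simp [Finset.univ_eq_empty] at hlθstarsum
  set M : ℝ := ∑ s, lθstar s ^ α * lθ s ^ (1 - α) with hM
  have hMpos : 0 < M := by
    apply Finset.sum_pos
    · intro s _
      exact mul_pos (Real.rpow_pos_of_pos (hlθstarpos s) _)
        (Real.rpow_pos_of_pos (hlθpos s) _)
    · exact Finset.univ_nonempty
  -- the individual factor function
  set g : S → ℝ≥0∞ := fun s => ENNReal.ofReal ((lθ s / lθstar s) ^ (1 - α)) with hg
  have hgmeas : Measurable g := measurable_of_countable g
  -- G τ = g ∘ X τ
  set G : ℕ → Ω → ℝ≥0∞ := fun τ ω => g (X τ ω) with hG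
  have hGmeas : ∀ τ, Measurable (G τ) := fun τ => hgmeas.comp (hmeas τ)
  have hGindep : iIndepFun G P :=
    hindep.comp (fun _ => g) (fun _ => hgmeas)
  -- single-factor expectation
  have hsingle : ∀ τ, ∫⁻ ω, G τ ω ∂P = ENNReal.ofReal M := by
    intro τ
    have h1 : ∫⁻ ω, G τ ω ∂P = ∫⁻ s, g s ∂(P.map (X τ)) :=
      (lintegral_map hgmeas (hmeas τ)).symm
    rw [h1, lintegral_fintype]
    have h2 : ∀ s, (P.map (X τ)) {s} = ENNReal.ofReal (lθstar s) := by
      intro s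
      rw [Measure.map_apply (hmeas τ) (measurableSet_singleton s)]
      have : (X τ) ⁻¹' {s} = {ω | X τ ω = s} := rfl
      rw [this, hlaw]
    have h3 : ∀ s, g s * (P.map (X τ)) {s}
        = ENNReal.ofReal (lθstar s ^ α * lθ s ^ (1 - α)) := by
      intro s
      rw [h2, hg]
      rw [← ENNReal.ofReal_mul (Real.rpow_nonneg (div_pos (hlθpos s) (hlθstarpos s)).le _)]
      congr 1
      rw [Real.div_rpow (hlθpos s).le (hlθstarpos s).le]
      rw [div_mul_eq_mul_div, eq_comm,
        eq_div_iff (ne_of_gt (Real.rpow_pos_of_pos (hlθstarpos s) _))]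
      rw [mul_right_comm, ← Real.rpow_add (hlθstarpos s)]
      have hone : α + (1 - α) = 1 := by ring
      rw [hone, Real.rpow_one, mul_comm]
    simp_rw [h3]
    rw [← ENNReal.ofReal_sum_of_nonneg (fun s _ => mul_nonneg (Real.rpow_nonneg (hlθstarpos s).le _) (Real.rpow_nonneg (hlθpos s).le _))]
  -- product expectation by induction
  have hprod : ∀ n, ∫⁻ ω, ∏ τ ∈ Finset.range n, G τ ω ∂P = (ENNReal.ofReal M) ^ n := by
    intro n
    induction n with
    | zero => simp
    | succ n ih =>
      have hfun : (fun ω => ∏ τ ∈ Finset.range n, G τ ω)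
          = ∏ τ ∈ Finset.range n, G τ := by
        ext ω; rw [Finset.prod_apply]
      have hind : IndepFun (∏ τ ∈ Finset.range n, G τ) (G n) P :=
        hGindep.indepFun_prod_range_succ hGmeas n
      have hmeasprod : Measurable (∏ τ ∈ Finset.range n, G τ) := by
        rw [← hfun]; exact Finset.measurable_prod _ (fun τ _ => hGmeas τ)
      calc ∫⁻ ω, ∏ τ ∈ Finset.range (n+1), G τ ω ∂P
          = ∫⁻ ω, (∏ τ ∈ Finset.range n, G τ) ω * G n ω ∂P := by
            congr 1; ext ω; rw [Finset.prod_range_succ, Finset.prod_apply]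
        _ = (∫⁻ ω, (∏ τ ∈ Finset.range n, G τ) ω ∂P) * ∫⁻ ω, G n ω ∂P :=
            lintegral_mul_eq_lintegral_mul_lintegral_of_indepFun
              hmeasprod (hGmeas n) hind
        _ = (ENNReal.ofReal M) ^ n * ENNReal.ofReal M := by
            rw [← hfun, ih, hsingle]
        _ = (ENNReal.ofReal M) ^ (n + 1) := by rw [pow_succ]
    -- Markov
  set F : Ω → ℝ≥0∞ := fun ω => ∏ τ ∈ Finset.range t, G τ ω with hF
  have hFmeas : Measurable F := Finset.measurable_prod _ (fun τ _ => hGmeas τ)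
  set c : ℝ≥0∞ := ENNReal.ofReal (Real.exp (-β * t * (1 - α))) with hc
  have hcpos : c ≠ 0 := by
    rw [hc]; simp [ENNReal.ofReal_eq_zero, not_le, Real.exp_pos]
  have hsubset : {ω | (∏ τ ∈ Finset.range t, lθ (X τ ω) / lθstar (X τ ω)) > Real.exp (-β * t)}
      ⊆ {ω | c ≤ F ω} := by
    intro ω hω
    simp only [Set.mem_setOf_eq] at hω ⊢
    have hZnn : ∀ τ ∈ Finset.range t, 0 ≤ lθ (X τ ω) / lθstar (X τ ω) := by
      intro τ _; exact (div_pos (hlθpos _) (hlθstarpos _)).le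
    have hFω : F ω = ENNReal.ofReal
        ((∏ τ ∈ Finset.range t, lθ (X τ ω) / lθstar (X τ ω)) ^ (1 - α)) := by
      rw [hF, ← Real.finset_prod_rpow _ _ hZnn,
        ENNReal.ofReal_prod_of_nonneg (fun τ hτ => Real.rpow_nonneg (hZnn τ hτ) _)]
    rw [hFω, hc]
    apply ENNReal.ofReal_le_ofReal
    rw [Real.exp_mul]
    exact (Real.rpow_le_rpow (Real.exp_pos _).le hω.le (by linarith))
  calc P {ω | (∏ τ ∈ Finset.range t, lθ (X τ ω) / lθstar (X τ ω)) > Real.exp (-β * t)}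
      ≤ P {ω | c ≤ F ω} := measure_mono hsubset
    _ ≤ (∫⁻ ω, F ω ∂P) / c :=
        meas_ge_le_lintegral_div hFmeas.aemeasurable hcpos (by rw [hc]; exact ENNReal.ofReal_ne_top)
    _ = (ENNReal.ofReal M) ^ t / c := by rw [hF, hprod]
    _ = ENNReal.ofReal (M ^ t / Real.exp (-β * t * (1 - α))) := by
        rw [ENNReal.ofReal_div_of_pos (Real.exp_pos _), ENNReal.ofReal_pow hMpos.le]
    _ ≤ ENNReal.ofReal (Real.exp (-(t : ℝ) * (1 - α) *
          ((1 / (α - 1)) * Real.log M - β))) := by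
        apply ENNReal.ofReal_le_ofReal
        rw [div_le_iff₀ (Real.exp_pos _), ← Real.exp_add]
        have hMt : M ^ t = Real.exp (t * Real.log M) := by
          rw [← Real.exp_log hMpos, ← Real.exp_nat_mul, Real.exp_log hMpos]
        rw [hMt]
        apply Real.exp_le_exp.mpr
        have hα1' : α - 1 ≠ 0 := by linarith
        have : (1 - α) * ((1 / (α - 1)) * Real.log M) = -Real.log M := by
          field_simp; ring
        nlinarith [this]
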